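/- Suppose M is a (not necessarily perfect) matching of G and the duals y, z satisfy: (i) z(B) ≥ 0 for every odd set B; (ii) whenever z(B) > 0, M contains exactly ⌊|B|/2⌋ edges with both endpoints in B (active blossoms); (iii) yz(e) ≥ w(e) − 2 for every edge e (near domination); (iv) yz(e) ≤ w(e) for every e ∈ M (near tightness). Then for every perfect matching M' of G, w(M') ≤ w(M) + Σ_{u not matched by M} y(u) + 2|M'|. -/

import Mathlib

open Finset
open scoped Classical

/-- `yz(e)` for an edge `e = {u,v}`: `y u + y v + ∑_{B ⊇ {u,v}} z B`. -/
noncomputable def yzE {V : Type*} [Fintype V] (y : V → ℤ) (z : Finset V → ℤ) : Sym2 V → ℤ :=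
  Sym2.lift ⟨fun u v => y u + y v + ∑ B ∈ Finset.univ.filter (fun B : Finset V => u ∈ B ∧ v ∈ B), z B,
    fun u v => by
      dsimp only
      rw [add_comm (y u) (y v)]
      congr 1
      apply Finset.sum_congr _ (fun _ _ => rfl)
      ext B
      simp [and_comm]⟩

/-- `M` is a matching of `G`: a set of edges of `G`, pairwise vertex-disjoint. -/
def IsMatchingF {V : Type*} (G : SimpleGraph V) (M : Finset (Sym2 V)) : Prop :=
  (∀ e ∈ M, e ∈ G.edgeSet) ∧ ∀ e ∈ M, ∀ f ∈ M, e ≠ f → ∀ v : V, v ∈ e → v ∉ f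

/-- A matching is perfect if every vertex is covered. -/
def IsPerfectF {V : Type*} (M : Finset (Sym2 V)) : Prop := ∀ v : V, ∃ e ∈ M, v ∈ e

/-- A vertex is free (unmatched) if it lies on no edge of `M`. -/
def isFreeV {V : Type*} (M : Finset (Sym2 V)) (v : V) : Prop := ∀ e ∈ M, v ∉ e

/-- The edges of `M` with both endpoints in `B` (i.e. `M ∩ E(B)`). -/
noncomputable def edgesWithin {V : Type*} (M : Finset (Sym2 V)) (B : Finset V) : Finset (Sym2 V) :=
  M.filter (fun e => ∀ v ∈ e, v ∈ B)

/-- The dual objective `yz(V) = ∑ y(v) + ∑_B z(B)·⌊|B|/2⌋`. -/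
noncomputable def dualObj {V : Type*} [Fintype V] (y : V → ℤ) (z : Finset V → ℤ) : ℤ :=
  (∑ v, y v) + ∑ B : Finset V, z B * ((B.card / 2 : ℕ) : ℤ)

/-!
Near domination bounds `w(M')` by `∑_{e ∈ M'} yz(e) + 2|M'|`. Regrouping `∑_{e ∈ N} yz(e)` over
vertices and blossoms gives `y(V(N)) + ∑_B z(B) |N ∩ E(B)|` for any matching `N`. For the perfect
matching `M'` this is at most the dual objective `y(V) + ∑_B z(B) ⌊|B|/2⌋`, since `z ≥ 0` and a
matching has at most `⌊|B|/2⌋` edges inside `B`; for `M` it is exactly the dual objective minus the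
`y`-values of the free vertices, because every blossom with `z(B) > 0` is active. Near tightness
then bounds `∑_{e ∈ M} yz(e)` by `w(M)`.
-/

section Matchings

variable {V : Type*}

noncomputable def matchedVerts (M : Finset (Sym2 V)) : Finset V :=
  M.biUnion Sym2.toFinset

lemma mem_matchedVerts {M : Finset (Sym2 V)} {v : V} : v ∈ matchedVerts M ↔ ∃ e ∈ M, v ∈ e := by
  simp [matchedVerts, Sym2.mem_toFinset]

lemma filter_isFreeV_eq_compl [Fintype V] (M : Finset (Sym2 V)) :
    univ.filter (isFreeV M) = (matchedVerts M)ᶜ := by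
  ext v
  simp [isFreeV, mem_matchedVerts]

lemma IsPerfectF.matchedVerts_eq_univ [Fintype V] {M : Finset (Sym2 V)} (hM : IsPerfectF M) :
    matchedVerts M = univ :=
  eq_univ_of_forall fun v => mem_matchedVerts.2 (hM v)

lemma yzE_eq_of_not_isDiag [Fintype V] (y : V → ℤ) (z : Finset V → ℤ) {e : Sym2 V}
    (he : ¬ e.IsDiag) :
    yzE y z e = ∑ v ∈ e.toFinset, y v + ∑ B with ∀ v ∈ e, v ∈ B, z B := by
  induction e with
  | _ u v =>
    rw [Sym2.mk_isDiag_iff] at he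
    simp [yzE, Sym2.toFinset_mk_eq, sum_pair he]

lemma sum_sum_superset_eq_sum_mul_card_edgesWithin [Fintype V] (z : Finset V → ℤ) (M : Finset (Sym2 V)) :
    ∑ e ∈ M, ∑ B with ∀ v ∈ e, v ∈ B, z B = ∑ B, z B * #(edgesWithin M B) := by
  simp_rw [sum_filter]
  rw [sum_comm]
  refine sum_congr rfl fun B _ => ?_
  rw [← sum_filter, sum_const, nsmul_eq_mul, mul_comm]
  congr

namespace IsMatchingF

variable {G : SimpleGraph V} {M : Finset (Sym2 V)}

lemma not_isDiag (hM : IsMatchingF G M) {e : Sym2 V} (he : e ∈ M) : ¬ e.IsDiag :=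
  G.not_isDiag_of_mem_edgeSet (hM.1 e he)

lemma subset {N : Finset (Sym2 V)} (hM : IsMatchingF G M) (hNM : N ⊆ M) : IsMatchingF G N :=
  ⟨fun e he => hM.1 e (hNM he), fun e he f hf => hM.2 e (hNM he) f (hNM hf)⟩

lemma pairwiseDisjoint_toFinset (hM : IsMatchingF G M) :
    (M : Set (Sym2 V)).PairwiseDisjoint Sym2.toFinset := by
  intro e he f hf hef
  rw [Function.onFun, disjoint_left]
  intro v hve hvf
  exact hM.2 e he f hf hef v (Sym2.mem_toFinset.1 hve) (Sym2.mem_toFinset.1 hvf)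

lemma card_matchedVerts (hM : IsMatchingF G M) : #(matchedVerts M) = 2 * #M := by
  rw [matchedVerts, card_biUnion hM.pairwiseDisjoint_toFinset,
    sum_congr rfl fun e he => Sym2.card_toFinset_of_not_isDiag e (hM.not_isDiag he),
    sum_const, smul_eq_mul, mul_comm]

lemma card_edgesWithin_le (hM : IsMatchingF G M) (B : Finset V) :
    #(edgesWithin M B) ≤ #B / 2 := by
  have hsub : matchedVerts (edgesWithin M B) ⊆ B := by
    intro v hv
    obtain ⟨e, he, hve⟩ := mem_matchedVerts.1 hv
    exact (mem_filter.1 he).2 v hve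
  have hcard := card_le_card hsub
  rw [(hM.subset (filter_subset _ M) : IsMatchingF G (edgesWithin M B)).card_matchedVerts] at hcard
  omega

variable [Fintype V] (y : V → ℤ) (z : Finset V → ℤ)

lemma sum_yzE_eq (hM : IsMatchingF G M) :
    ∑ e ∈ M, yzE y z e = ∑ v ∈ matchedVerts M, y v + ∑ B, z B * #(edgesWithin M B) := by
  rw [sum_congr rfl fun e he => yzE_eq_of_not_isDiag y z (hM.not_isDiag he), sum_add_distrib,
    matchedVerts, sum_biUnion hM.pairwiseDisjoint_toFinset, sum_sum_superset_eq_sum_mul_card_edgesWithin]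

lemma sum_yzE_le_dualObj (hM : IsMatchingF G M) (hMp : IsPerfectF M) (hz : ∀ B, 0 ≤ z B) :
    ∑ e ∈ M, yzE y z e ≤ dualObj y z := by
  rw [hM.sum_yzE_eq, hMp.matchedVerts_eq_univ, dualObj]
  gcongr with B
  · exact hz B
  · exact_mod_cast hM.card_edgesWithin_le B

lemma sum_yzE_add_sum_free (hM : IsMatchingF G M) (hz : ∀ B, 0 ≤ z B)
    (hactive : ∀ B : Finset V, 0 < z B → #(edgesWithin M B) = #B / 2) :
    ∑ e ∈ M, yzE y z e + ∑ u with isFreeV M u, y u = dualObj y z := by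
  have hblossoms : ∀ B, z B * #(edgesWithin M B) = z B * ((#B / 2 : ℕ) : ℤ) := by
    intro B
    rcases (hz B).lt_or_eq with hpos | hzero
    · rw [hactive B hpos]
    · rw [← hzero, zero_mul, zero_mul]
  rw [hM.sum_yzE_eq, filter_isFreeV_eq_compl, add_right_comm, sum_add_sum_compl, dualObj,
    sum_congr rfl fun B _ => hblossoms B]

end IsMatchingF

end Matchings

/-- under relaxed complementary slackness for a (not necessarily perfect)
matching `M`, every perfect matching `M'` satisfies
`w(M') ≤ w(M) + ∑_{u free in M} y(u) + 2|M'|`. -/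
theorem perfect_weight_le_of_relaxedCS {V : Type*} [Fintype V] (G : SimpleGraph V)
    (w : Sym2 V → ℤ) (y : V → ℤ) (z : Finset V → ℤ)
    (hsupp : ∀ B : Finset V, z B ≠ 0 → Odd B.card ∧ 3 ≤ B.card)
    (M : Finset (Sym2 V)) (hM : IsMatchingF G M)
    (hz : ∀ B : Finset V, Odd B.card → 0 ≤ z B)
    (hactive : ∀ B : Finset V, 0 < z B → (edgesWithin M B).card = B.card / 2)
    (hneardom : ∀ e ∈ G.edgeSet, w e - 2 ≤ yzE y z e)
    (hneartight : ∀ e ∈ M, yzE y z e ≤ w e)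
    (M' : Finset (Sym2 V)) (hM' : IsMatchingF G M') (hM'p : IsPerfectF M') :
    ∑ e ∈ M', w e ≤
      (∑ e ∈ M, w e) + (∑ u ∈ Finset.univ.filter (fun u => isFreeV M u), y u)
        + 2 * (M'.card : ℤ) := by
  have hz_nonneg : ∀ B, 0 ≤ z B := fun B =>
    (eq_or_ne (z B) 0).elim (fun h => h.ge) fun h => hz B (hsupp B h).1
  calc ∑ e ∈ M', w e
      ≤ ∑ e ∈ M', (yzE y z e + 2) :=
        sum_le_sum fun e he => by linarith [hneardom e (hM'.1 e he)]
    _ = ∑ e ∈ M', yzE y z e + 2 * #M' := by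
        rw [sum_add_distrib, sum_const, nsmul_eq_mul, mul_comm]
    _ ≤ dualObj y z + 2 * #M' := by
        gcongr
        exact hM'.sum_yzE_le_dualObj y z hM'p hz_nonneg
    _ = ∑ e ∈ M, yzE y z e + ∑ u with isFreeV M u, y u + 2 * #M' := by
        rw [hM.sum_yzE_add_sum_free y z hz_nonneg hactive]
    _ ≤ ∑ e ∈ M, w e + ∑ u with isFreeV M u, y u + 2 * #M' := by
        gcongr ?_ + _ + _
        exact sum_le_sum hneartight
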